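/- Let a ∈ T_n have rank 1. If 1 ≤ n ≤ 15, then the minimum transformation degree of the variant T_n^a equals 2n − 1; if n ≥ 16, then the minimum transformation degree of T_n^a is at most 2n − 2. -/

import Mathlib

/-!
With `a` constant at `c`, every variant product of `f` and `g` is the constant map at `g c`.

For `2n - 1`, let `f` act on `n` sink points as the constant `f c` and send `n - 1` further
points to the values `f i`, `i ≠ c`. For `n ≥ 16` fewer sinks suffice: `f c` is recorded as a pair
in `Fin ⌈n/2⌉ × Fin 2` on `⌈n/2⌉ + 2` sink points, and the other values of `f` as a word of length
`2n - 4 - ⌈n/2⌉` over the first `⌈n/2⌉` sinks, which is long enough because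
`n ^ (n - 1) ≤ ⌈n/2⌉ ^ (2n - 4 - ⌈n/2⌉)`.

Conversely, let `φ` embed the variant into `T_m` and let `R` be the union of the images of all
`φ f`. On `R`, `φ f` depends only on `f c`, and every `φ f` preserves the profile
`v ↦ φ (const v) z` of a point `z`. Counting the maps fixing `c` gives
`n ^ (n - 1) ≤ U ^ (m - |R|)`, and counting the constants gives `n ≤ U * 2 ^ (|R| - U - 1)`,
where `U` is the largest number of points of `R` sharing a profile. For `2 ≤ n ≤ 15` and
`m ≤ 2n - 2` a finite check shows that these are incompatible.
-/

/-- Multiplication of the full transformation semigroup: `(f * g) x = g (f x)`. -/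
def tMul {n : ℕ} (f g : Fin n → Fin n) : Fin n → Fin n := fun x => g (f x)

/-- The rank of a transformation: the cardinality of its image. -/
def trank {n : ℕ} (f : Fin n → Fin n) : ℕ := (Finset.univ.image f).card

/-- The minimum transformation degree of the variant `T_n^a` (operation
`f ⋆ g = fun x => g (a (f x))`): the least `m ≥ 1` such that there is an injective
semigroup homomorphism from `T_n^a` into `T_m`. -/
noncomputable def variantDegree (n : ℕ) (a : Fin n → Fin n) : ℕ :=
  sInf {m | 1 ≤ m ∧ ∃ φ : (Fin n → Fin n) → (Fin m → Fin m), Function.Injective φ ∧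
      ∀ f g : Fin n → Fin n, φ (fun x => g (a (f x))) = tMul (φ f) (φ g)}

open Finset Function

theorem Finset.prod_le_two_pow_sum_sub_one {ι : Type*} {s : Finset ι} {f : ι → ℕ}
    (hf : ∀ i ∈ s, 1 ≤ f i) : ∏ i ∈ s, f i ≤ 2 ^ (∑ i ∈ s, f i - 1) := by
  classical
  induction s using Finset.induction_on with
  | empty => simp
  | insert a s has ih =>
    rw [prod_insert has, sum_insert has]
    have ha := hf a (mem_insert_self a s)
    calc f a * ∏ i ∈ s, f i
        ≤ 2 ^ (f a - 1) * 2 ^ (∑ i ∈ s, f i - 1) :=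
          Nat.mul_le_mul (by have := (f a - 1).lt_two_pow_self; omega)
            (ih fun i hi => hf i (mem_insert_of_mem hi))
      _ ≤ 2 ^ (f a + ∑ i ∈ s, f i - 1) := by
          rw [← pow_add]; exact Nat.pow_le_pow_right two_pos (by omega)

theorem Finset.prod_le_mul_two_pow {ι : Type*} [DecidableEq ι] {s : Finset ι} {f : ι → ℕ} {i : ι}
    (hi : i ∈ s) (hf : ∀ j ∈ s, 1 ≤ f j) :
    ∏ j ∈ s, f j ≤ f i * 2 ^ (∑ j ∈ s, f j - f i - 1) := by
  rw [← mul_prod_erase s f hi, ← add_sum_erase s f hi, Nat.add_sub_cancel_left]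
  exact Nat.mul_le_mul_left _ (prod_le_two_pow_sum_sub_one fun j hj => hf j (mem_of_mem_erase hj))

theorem pow_sub_lt_pow_of_le_mul_two_pow {n r U : ℕ} (hn : 2 ≤ n) (hn15 : n ≤ 15) (hU : 1 ≤ U)
    (hUr : U ≤ r) (hr : r ≤ 2 * n - 2) (h : n ≤ U * 2 ^ (r - U - 1)) :
    U ^ (2 * n - 2 - r) < n ^ (n - 1) := by
  have table : ∀ n < 16, ∀ r < 2 * n - 1, ∀ U < r + 1,
      (2 ≤ n ∧ 1 ≤ U ∧ n ≤ U * 2 ^ (r - U - 1)) → U ^ (2 * n - 2 - r) < n ^ (n - 1) := by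
    decide
  exact table n (by omega) r (by omega) U (by omega) ⟨hn, hU, h⟩

theorem two_pow_le_pow_sub_three {t : ℕ} (ht : 8 ≤ t) : 2 ^ (2 * t - 1) ≤ t ^ (t - 3) := by
  induction t, ht using Nat.le_induction with
  | base => norm_num
  | succ t ht ih =>
    calc 2 ^ (2 * (t + 1) - 1) = 2 ^ (2 * t - 1) * 4 := by
          rw [show 2 * (t + 1) - 1 = 2 * t - 1 + 2 by omega, pow_add]; norm_num
      _ ≤ t ^ (t - 3) * t := Nat.mul_le_mul ih (by omega)
      _ = t ^ (t + 1 - 3) := by rw [← pow_succ]; congr 1; omega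
      _ ≤ (t + 1) ^ (t + 1 - 3) := Nat.pow_le_pow_left (by omega) _

theorem four_pow_le_succ_pow_sub_three {t : ℕ} (ht : 9 ≤ t) : 4 ^ t ≤ (t + 1) ^ (t - 3) := by
  induction t, ht using Nat.le_induction with
  | base => norm_num
  | succ t ht ih =>
    calc 4 ^ (t + 1) = 4 ^ t * 4 := pow_succ 4 t
      _ ≤ (t + 1) ^ (t - 3) * (t + 1) := Nat.mul_le_mul ih (by omega)
      _ = (t + 1) ^ (t + 1 - 3) := by rw [← pow_succ]; congr 1; omega
      _ ≤ (t + 1 + 1) ^ (t + 1 - 3) := Nat.pow_le_pow_left (by omega) _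

theorem pow_pred_le_half_pow {n : ℕ} (hn : 16 ≤ n) :
    n ^ (n - 1) ≤ ((n + 1) / 2) ^ (2 * n - 4 - (n + 1) / 2) := by
  rcases Nat.even_or_odd' n with ⟨t, rfl | rfl⟩
  · rw [show (2 * t + 1) / 2 = t by omega,
      show 2 * (2 * t) - 4 - t = (t - 3) + (2 * t - 1) by omega, pow_add, mul_pow]
    exact Nat.mul_le_mul_right _ (two_pow_le_pow_sub_three (by omega))
  · rw [show (2 * t + 1 + 1) / 2 = t + 1 by omega, show 2 * t + 1 - 1 = 2 * t by omega,
      show 2 * (2 * t + 1) - 4 - (t + 1) = (t - 3) + 2 * t by omega, pow_add]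
    obtain rfl | ht := (show t = 8 ∨ 9 ≤ t by omega)
    · norm_num
    calc (2 * t + 1) ^ (2 * t) ≤ (2 * (t + 1)) ^ (2 * t) := Nat.pow_le_pow_left (by omega) _
      _ = 4 ^ t * (t + 1) ^ (2 * t) := by rw [mul_pow, pow_mul]; norm_num
      _ ≤ (t + 1) ^ (t - 3) * (t + 1) ^ (2 * t) :=
          Nat.mul_le_mul_right _ (four_pow_le_succ_pow_sub_three ht)

/-- Both sides compose left to right, as in `tMul`: `g ∘ a ∘ f` is the variant product of `f`
and `g`. -/
def IsVariantHom {α β : Type*} (a : α → α) (φ : (α → α) → β → β) : Prop :=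
  ∀ f g, φ (g ∘ a ∘ f) = φ g ∘ φ f

def variantDegrees (n : ℕ) (a : Fin n → Fin n) : Set ℕ :=
  {m | 1 ≤ m ∧ ∃ φ : (Fin n → Fin n) → Fin m → Fin m, Injective φ ∧ IsVariantHom a φ}

theorem card_mem_variantDegrees {n : ℕ} {a : Fin n → Fin n} {β : Type*} [Fintype β] [Nonempty β]
    {φ : (Fin n → Fin n) → β → β} (hinj : Injective φ) (hφ : IsVariantHom a φ) :
    Fintype.card β ∈ variantDegrees n a := by
  let e := Fintype.equivFin β
  refine ⟨Fintype.card_pos, fun f => e ∘ φ f ∘ e.symm, fun f f' h => hinj ?_, fun f g => ?_⟩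
  · funext z; simpa using congrFun h (e z)
  · ext z; simp [hφ f g]

theorem variantDegree_le_card {n : ℕ} {a : Fin n → Fin n} {β : Type*} [Fintype β] [Nonempty β]
    {φ : (Fin n → Fin n) → β → β} (hinj : Injective φ) (hφ : IsVariantHom a φ) :
    variantDegree n a ≤ Fintype.card β :=
  Nat.sInf_le (card_mem_variantDegrees hinj hφ)

theorem exists_injective_variantHom_fin_variantDegree {n : ℕ} {a : Fin n → Fin n} {β : Type*}
    [Fintype β] [Nonempty β] {φ : (Fin n → Fin n) → β → β} (hinj : Injective φ)
    (hφ : IsVariantHom a φ) : 1 ≤ variantDegree n a ∧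
      ∃ ψ : (Fin n → Fin n) → Fin (variantDegree n a) → Fin (variantDegree n a),
        Injective ψ ∧ IsVariantHom a ψ :=
  Nat.sInf_mem ⟨_, card_mem_variantDegrees hinj hφ⟩

theorem exists_eq_const_of_trank_eq_one {n : ℕ} {a : Fin n → Fin n} (ha : trank a = 1) :
    ∃ c, a = fun _ => c := by
  obtain ⟨c, hc⟩ := card_eq_one.mp ha
  exact ⟨c, funext fun x => mem_singleton.mp (hc ▸ mem_image_of_mem a (mem_univ x))⟩

theorem Fintype.card_fun_subtype_ne {α : Type*} [Fintype α] [DecidableEq α] (c : α) :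
    Fintype.card ({i // i ≠ c} → α) = Fintype.card α ^ (Fintype.card α - 1) := by
  simp

section Constructions

variable {α : Type*}

theorem exists_injective_variantHom_sum_subtype_ne [DecidableEq α] (c : α) :
    ∃ φ : (α → α) → α ⊕ {i // i ≠ c} → α ⊕ {i // i ≠ c},
      Injective φ ∧ IsVariantHom (fun _ => c) φ := by
  refine ⟨fun f => Sum.elim (fun _ => .inl (f c)) (fun i => .inl (f i)), fun f f' h => ?_,
    fun f g => ?_⟩
  · apply (Equiv.funSplitAt c α).injective
    simp only [Equiv.funSplitAt_apply, Prod.mk.injEq]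
    exact ⟨Sum.inl_injective (congrFun h (.inl c)),
      funext fun i => Sum.inl_injective (congrFun h (.inr i))⟩
  · ext (z | z) <;> rfl

variable {P Q M : Type*} [DecidableEq P] [Fintype M]

/-- The swap makes the code of the constant map at `w` the constant `(ι w).1`, as the
homomorphism property forces, while `f ↦ (f c, restrictCode c ι e f)` stays injective. -/
def restrictCode (c : α) (ι : α ↪ P × Q) (e : ({i // i ≠ c} → α) ↪ (M → P)) (f : α → α) :
    M → P :=
  Equiv.swap (e fun _ => f c) (fun _ => (ι (f c)).1) (e fun i => f i)

theorem restrictCode_const (c : α) (ι : α ↪ P × Q) (e : ({i // i ≠ c} → α) ↪ (M → P)) (w : α) :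
    restrictCode c ι e (fun _ => w) = fun _ => (ι w).1 :=
  Equiv.swap_apply_left _ _

theorem eq_of_restrictCode_eq [DecidableEq α] {c : α} {ι : α ↪ P × Q}
    {e : ({i // i ≠ c} → α) ↪ (M → P)} {f f' : α → α} (hc : f c = f' c)
    (h : restrictCode c ι e f = restrictCode c ι e f') :
    f = f' := by
  rw [restrictCode, restrictCode, hc] at h
  apply (Equiv.funSplitAt c α).injective
  simp only [Equiv.funSplitAt_apply, Prod.mk.injEq]
  exact ⟨hc, e.injective ((Equiv.swap _ _).injective h)⟩

theorem exists_injective_variantHom_sum_sum [DecidableEq α] (c : α) (ι : α ↪ P × Q)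
    (e : ({i // i ≠ c} → α) ↪ (M → P)) :
    ∃ φ : (α → α) → P ⊕ Q ⊕ M → P ⊕ Q ⊕ M, Injective φ ∧ IsVariantHom (fun _ => c) φ := by
  refine ⟨fun f => Sum.elim (fun _ => .inl (ι (f c)).1)
    (Sum.elim (fun _ => .inr (.inl (ι (f c)).2)) fun j => .inl (restrictCode c ι e f j)),
    fun f f' h => ?_, fun f g => ?_⟩
  · have hc : f c = f' c := ι.injective <| Prod.ext
      (Sum.inl_injective (congrFun h (.inl (ι c).1)))
      (Sum.inl_injective (Sum.inr_injective (congrFun h (.inr (.inl (ι c).2)))))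
    exact eq_of_restrictCode_eq hc
      (funext fun j => Sum.inl_injective (congrFun h (.inr (.inr j))))
  · funext z
    rcases z with p | q | j
    · rfl
    · rfl
    · exact congrArg Sum.inl (congrFun (restrictCode_const c ι e (g c)) j)

end Constructions

def profile {α β : Type*} (φ : (α → α) → β → β) (z : β) : α → β := fun v => φ (fun _ => v) z

namespace IsVariantHom

variable {α β : Type*} {c : α} {φ : (α → α) → β → β}

theorem apply_apply (hφ : IsVariantHom (fun _ => c) φ) (f g : α → α) (y : β) :
    φ f (φ g y) = φ (fun _ => f c) y :=
  (congrFun (hφ g f) y).symm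

theorem profile_apply (hφ : IsVariantHom (fun _ => c) φ) (f : α → α) (z : β) :
    profile φ (φ f z) = profile φ z :=
  funext fun v => hφ.apply_apply (fun _ => v) f z

end IsVariantHom

section LowerBound

variable {α β : Type*} [Fintype α] [DecidableEq α] [Fintype β] [DecidableEq β]

def jointImage (φ : (α → α) → β → β) : Finset β := univ.image (uncurry φ)

def profiles (φ : (α → α) → β → β) : Finset (α → β) := (jointImage φ).image (profile φ)

def profileFiber (φ : (α → α) → β → β) (p : α → β) : Finset β :=
  {w ∈ jointImage φ | profile φ w = p}

theorem card_jointImage_eq_sum (φ : (α → α) → β → β) :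
    #(jointImage φ) = ∑ p ∈ profiles φ, #(profileFiber φ p) :=
  card_eq_sum_card_image _ _

theorem profileFiber_nonempty {φ : (α → α) → β → β} {p : α → β} (hp : p ∈ profiles φ) :
    (profileFiber φ p).Nonempty := by
  obtain ⟨w, hw, rfl⟩ := mem_image.mp hp
  exact ⟨w, mem_filter.mpr ⟨hw, rfl⟩⟩

namespace IsVariantHom

variable {c : α} {φ : (α → α) → β → β}

theorem apply_eq_of_mem_jointImage (hφ : IsVariantHom (fun _ => c) φ) {f f' : α → α}
    (h : f c = f' c) {z : β} (hz : z ∈ jointImage φ) : φ f z = φ f' z := by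
  obtain ⟨⟨g, y⟩, -, rfl⟩ := mem_image.mp hz
  simp only [uncurry_apply_pair, hφ.apply_apply, h]

theorem apply_mem_profileFiber (hφ : IsVariantHom (fun _ => c) φ) (f : α → α) (z : β) :
    φ f z ∈ profileFiber φ (profile φ z) :=
  mem_filter.mpr ⟨mem_image_of_mem _ (mem_univ (f, z)), hφ.profile_apply f z⟩

theorem profile_mem_profiles (hφ : IsVariantHom (fun _ => c) φ) (z : β) :
    profile φ z ∈ profiles φ :=
  mem_image.mpr ⟨_, mem_image_of_mem _ (mem_univ ((fun _ => c), z)), hφ.profile_apply _ z⟩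

theorem apply_mem_profileFiber_of_mem_profiles (hφ : IsVariantHom (fun _ => c) φ)
    {p : α → β} (hp : p ∈ profiles φ) (v : α) : p v ∈ profileFiber φ p := by
  obtain ⟨w, -, rfl⟩ := mem_image.mp hp
  exact hφ.apply_mem_profileFiber _ w

/-- A map fixing `c` is determined by its values off the joint image, and each such value lies
in the profile class of its argument. -/
theorem pow_le_prod_card_profileFiber_compl (hφ : IsVariantHom (fun _ => c) φ)
    (hinj : Injective φ) :
    Fintype.card α ^ (Fintype.card α - 1) ≤
      ∏ z ∈ (jointImage φ)ᶜ, #(profileFiber φ (profile φ z)) := by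
  let extend : ({i // i ≠ c} → α) → α → α := fun h => (Equiv.funSplitAt c α).symm (c, h)
  have hext : ∀ h, extend h c = c := by simp [extend]
  let F (h : {i // i ≠ c} → α) (z : ↥(jointImage φ)ᶜ) : ↥(profileFiber φ (profile φ z)) :=
    ⟨φ (extend h) z, hφ.apply_mem_profileFiber _ _⟩
  have hF : Injective F := by
    intro h h' hhh
    have : φ (extend h) = φ (extend h') := funext fun z => by
      by_cases hz : z ∈ jointImage φ
      · exact hφ.apply_eq_of_mem_jointImage ((hext h).trans (hext h').symm) hz
      · exact congrArg Subtype.val (congrFun hhh ⟨z, mem_compl.mpr hz⟩)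
    simpa [extend] using (Equiv.funSplitAt c α).symm.injective (hinj this)
  calc Fintype.card α ^ (Fintype.card α - 1) = Fintype.card ({i // i ≠ c} → α) :=
        (Fintype.card_fun_subtype_ne c).symm
    _ ≤ _ := Fintype.card_le_of_injective F hF
    _ = _ := by
      simp only [Fintype.card_pi, Fintype.card_coe]
      exact prod_coe_sort _ fun z => #(profileFiber φ (profile φ z))

/-- The constant maps are determined by their values at one point of each profile class. -/
theorem card_le_prod_card_profileFiber (hφ : IsVariantHom (fun _ => c) φ)
    (hinj : Injective φ) :
    Fintype.card α ≤ ∏ p ∈ profiles φ, #(profileFiber φ p) := by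
  let G (v : α) (p : ↥(profiles φ)) : ↥(profileFiber φ p) :=
    ⟨p.1 v, hφ.apply_mem_profileFiber_of_mem_profiles p.2 v⟩
  have hG : Injective G := by
    intro v v' h
    have : φ (fun _ => v) = φ (fun _ => v') := funext fun z =>
      congrArg Subtype.val (congrFun h ⟨profile φ z, hφ.profile_mem_profiles z⟩)
    exact congrFun (hinj this) c
  calc Fintype.card α ≤ _ := Fintype.card_le_of_injective G hG
    _ = _ := by
      simp only [Fintype.card_pi, Fintype.card_coe]
      exact prod_coe_sort _ fun p => #(profileFiber φ p)

end IsVariantHom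

end LowerBound

theorem IsVariantHom.two_mul_card_sub_one_le_card {α β : Type*} [Fintype α] [Fintype β] {c : α}
    {φ : (α → α) → β → β} (hφ : IsVariantHom (fun _ => c) φ) (hinj : Injective φ)
    (h2 : 2 ≤ Fintype.card α) (h15 : Fintype.card α ≤ 15) :
    2 * Fintype.card α - 1 ≤ Fintype.card β := by
  classical
  by_contra! hβ
  set n := Fintype.card α
  set R := jointImage φ
  have hA := hφ.pow_le_prod_card_profileFiber_compl hinj
  have hB := hφ.card_le_prod_card_profileFiber hinj
  have hne : (profiles φ).Nonempty := by
    by_contra h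
    rw [not_nonempty_iff_eq_empty.mp h, prod_empty] at hB
    omega
  obtain ⟨p, hp, hmax⟩ := exists_max_image _ (fun p => #(profileFiber φ p)) hne
  set U := #(profileFiber φ p)
  have hU : 1 ≤ U := card_pos.mpr (profileFiber_nonempty hp)
  have hUR : U ≤ #R := card_filter_le _ _
  have hRβ : #R ≤ Fintype.card β := card_le_univ R
  have hA' : n ^ (n - 1) ≤ U ^ (2 * n - 2 - #R) := calc
    _ ≤ U ^ #Rᶜ := hA.trans (prod_le_pow_card _ _ _ fun z _ => hmax _ (hφ.profile_mem_profiles z))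
    _ ≤ _ := Nat.pow_le_pow_right hU (by rw [card_compl]; omega)
  have hB' : n ≤ U * 2 ^ (#R - U - 1) := by
    refine hB.trans ?_
    rw [card_jointImage_eq_sum]
    exact prod_le_mul_two_pow hp fun q hq => card_pos.mpr (profileFiber_nonempty hq)
  exact (pow_sub_lt_pow_of_le_mul_two_pow h2 h15 hU hUR (by omega) hB').not_ge hA'

theorem variantDegree_const_le_two_mul_sub_one {n : ℕ} (c : Fin n) :
    variantDegree n (fun _ => c) ≤ 2 * n - 1 := by
  obtain ⟨φ, hinj, hφ⟩ := exists_injective_variantHom_sum_subtype_ne c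
  have : Nonempty (Fin n) := ⟨c⟩
  calc _ ≤ Fintype.card (Fin n ⊕ {i // i ≠ c}) := variantDegree_le_card hinj hφ
    _ = 2 * n - 1 := by simp; omega

theorem two_mul_sub_one_le_variantDegree_const {n : ℕ} (hn : n ≤ 15) (c : Fin n) :
    2 * n - 1 ≤ variantDegree n (fun _ => c) := by
  obtain ⟨φ, hinj, hφ⟩ := exists_injective_variantHom_sum_subtype_ne c
  have : Nonempty (Fin n) := ⟨c⟩
  obtain ⟨hpos, ψ, hψinj, hψ⟩ := exists_injective_variantHom_fin_variantDegree hinj hφ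
  rcases Nat.lt_or_ge n 2 with hn1 | hn2
  · omega
  · simpa using hψ.two_mul_card_sub_one_le_card hψinj (by simpa) (by simpa)

theorem variantDegree_const_le_two_mul_sub_two {n : ℕ} (hn : 16 ≤ n) (c : Fin n) :
    variantDegree n (fun _ => c) ≤ 2 * n - 2 := by
  set u := (n + 1) / 2
  obtain ⟨ι⟩ := Function.Embedding.nonempty_of_card_le (α := Fin n) (β := Fin u × Fin 2)
    (by simp only [Fintype.card_prod, Fintype.card_fin]; omega)
  obtain ⟨e⟩ := Function.Embedding.nonempty_of_card_le (α := {i // i ≠ c} → Fin n)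
    (β := Fin (2 * n - 4 - u) → Fin u)
    (by simpa [Fintype.card_fun_subtype_ne] using pow_pred_le_half_pow hn)
  obtain ⟨φ, hinj, hφ⟩ := exists_injective_variantHom_sum_sum c ι e
  have : Nonempty (Fin u) := ⟨⟨0, by omega⟩⟩
  calc _ ≤ _ := variantDegree_le_card hinj hφ
    _ = 2 * n - 2 := by simp; omega

/-- For a rank-`1` sandwich element `a ∈ T_n`: if `1 ≤ n ≤ 15` then the degree of the
variant `T_n^a` equals `2n - 1`, and if `n ≥ 16` then it is at most `2n - 2`. -/
theorem variant_degree_rank_one_bounds (n : ℕ) (a : Fin n → Fin n) (ha : trank a = 1) :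
    (1 ≤ n → n ≤ 15 → variantDegree n a = 2 * n - 1) ∧
    (16 ≤ n → variantDegree n a ≤ 2 * n - 2) := by
  obtain ⟨c, rfl⟩ := exists_eq_const_of_trank_eq_one ha
  exact ⟨fun _ hn => le_antisymm (variantDegree_const_le_two_mul_sub_one c)
      (two_mul_sub_one_le_variantDegree_const hn c),
    fun hn => variantDegree_const_le_two_mul_sub_two hn c⟩
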